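/- arXiv:1006.1567 — 5 statements merged into one kernel-verified Lean document; each statement's English description precedes it below -/
import Mathlib

section
/- For every integer n ≥ 1, ∫₀¹ u^(2n-1) · arccos(u) du = π·(2n)! / (n · 2^(2n+2) · (n!)²). -/
/-!
Substituting `u = cos x` turns the integral into `∫₀^{π/2} x cos^{2n-1} x sin x dx`, and an
integration by parts against `x` reduces this to `(1 / 2n) ∫₀^{π/2} cos^{2n} x dx`, which is
Wallis' integral `(π / 2) (2n)! / (4ⁿ (n!)²)`.
-/

open Real

open intervalIntegral

theorem integral_mul_arccos_eq_integral_mul_comp_cos_mul_sin {f : ℝ → ℝ} (hf : Continuous f) :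
    ∫ u in (0:ℝ)..1, f u * arccos u = ∫ x in (0:ℝ)..π / 2, x * f (cos x) * sin x := by
  have hsubst := integral_comp_mul_deriv (a := 0) (b := π / 2) (f := cos) (f' := fun x => -sin x)
    (g := fun u => f u * arccos u) (fun x _ => hasDerivAt_cos x) (by fun_prop)
    (hf.mul continuous_arccos)
  rw [cos_zero, cos_pi_div_two] at hsubst
  rw [integral_symm, ← hsubst, ← integral_neg]
  refine integral_congr fun x hx => ?_
  rw [Set.uIcc_of_le (by positivity)] at hx
  have harccos : arccos (cos x) = x := arccos_cos hx.1 (hx.2.trans (by linarith [pi_pos]))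
  simp only [Function.comp_apply, harccos]
  ring

theorem integral_mul_cos_pow_mul_sin (k : ℕ) :
    ∫ x in (0:ℝ)..π / 2, x * cos x ^ k * sin x =
      (∫ x in (0:ℝ)..π / 2, cos x ^ (k + 1)) / (k + 1) := by
  have hv : ∀ x ∈ Set.uIcc (0:ℝ) (π / 2),
      HasDerivAt (fun y => -cos y ^ (k + 1) / (k + 1)) (cos x ^ k * sin x) x := by
    intro x _
    refine (((hasDerivAt_cos x).fun_pow (k + 1)).fun_neg.div_const ((k : ℝ) + 1)).congr_deriv ?_
    push_cast
    field_simp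
  have hparts := integral_mul_deriv_eq_deriv_mul (fun x _ => hasDerivAt_id x) hv
    (by apply Continuous.intervalIntegrable; fun_prop)
    (by apply Continuous.intervalIntegrable; fun_prop)
  simp only [id, mul_assoc] at hparts ⊢
  rw [hparts, cos_pi_div_two, zero_pow k.succ_ne_zero]
  simp only [one_mul, integral_div, integral_neg]
  ring

theorem integral_cos_pow_two_mul (n : ℕ) :
    ∫ x in (0:ℝ)..π / 2, cos x ^ (2 * n) =
      π / 2 * (2 * n).factorial / (4 ^ n * (n.factorial : ℝ) ^ 2) := by
  induction n with
  | zero => simp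
  | succ m ih =>
    rw [show 2 * (m + 1) = 2 * m + 2 by ring, integral_cos_pow, ih, cos_pi_div_two, sin_zero,
      zero_pow (by omega), Nat.factorial_succ, Nat.factorial_succ, Nat.factorial_succ]
    push_cast
    field_simp
    ring

theorem integral_pow_mul_arccos (n : ℕ) (hn : 1 ≤ n) :
    ∫ u in (0:ℝ)..1, u ^ (2 * n - 1) * Real.arccos u =
      Real.pi * (Nat.factorial (2 * n)) /
        (n * 2 ^ (2 * n + 2) * ((Nat.factorial n : ℝ)) ^ 2) := by
  have hk : 2 * n - 1 + 1 = 2 * n := by omega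
  rw [integral_mul_arccos_eq_integral_mul_comp_cos_mul_sin (continuous_pow _),
    integral_mul_cos_pow_mul_sin, ← Nat.cast_add_one, hk, integral_cos_pow_two_mul,
    pow_add, pow_mul]
  push_cast
  field_simp
  ring
end

section
/- Let g(x) = arccos(x) - x·√(1-x²) for x ∈ [0,1]. Then ∫₀¹ g(u)·√(1-u²) du = π²/16. -/
/-! With `g x = arccos x - x √(1 - x²)` one has `g' = -2 √(1 - x²)` on `(-1, 1)`, so the integrand
`g √(1 - x²) = -g g' / 2` is the derivative of `-g² / 4`. Since `g 0 = π / 2` and `g 1 = 0`,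
the integral is `(π / 2)² / 4`. -/

open Real Set

lemma hasDerivAt_arccos_sub_mul_sqrt {x : ℝ} (h₁ : -1 < x) (h₂ : x < 1) :
    HasDerivAt (fun x => arccos x - x * √(1 - x ^ 2)) (-2 * √(1 - x ^ 2)) x := by
  have hpos : 0 < 1 - x ^ 2 := by nlinarith
  have hinner : HasDerivAt (fun x : ℝ => 1 - x ^ 2) (-(2 * x)) x := by
    simpa using (hasDerivAt_pow 2 x).const_sub 1
  refine ((hasDerivAt_arccos h₁.ne' h₂.ne).fun_sub
    ((hasDerivAt_id' x).fun_mul (hinner.sqrt hpos.ne'))).congr_deriv ?_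
  have hsqrt_ne : √(1 - x ^ 2) ≠ 0 := (sqrt_pos.2 hpos).ne'
  field_simp
  rw [sq_sqrt hpos.le]
  ring

theorem integral_g_mul_sqrt
    (g : ℝ → ℝ) (hg : ∀ x, g x = Real.arccos x - x * Real.sqrt (1 - x ^ 2)) :
    ∫ u in (0:ℝ)..1, g u * Real.sqrt (1 - u ^ 2) = Real.pi ^ 2 / 16 := by
  have hg' : g = fun x => arccos x - x * √(1 - x ^ 2) := funext hg
  have hcont : Continuous g := by rw [hg']; fun_prop
  have hderiv : ∀ u ∈ Ioo (0 : ℝ) 1,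
      HasDerivAt (fun x => -g x ^ 2 / 4) (g u * √(1 - u ^ 2)) u := fun u hu => by
    rw [hg']
    refine ((hasDerivAt_arccos_sub_mul_sqrt (by linarith [hu.1]) hu.2).pow 2).neg.div_const 4
      |>.congr_deriv ?_
    ring
  rw [intervalIntegral.integral_eq_sub_of_hasDerivAt_of_le zero_le_one (by fun_prop) hderiv
    ((by fun_prop : Continuous _).intervalIntegrable _ _)]
  norm_num [hg]
  ring
end

section
/- Let g(x) = arccos(x) - x·√(1-x²). Then ∫₀¹ g(u)² du = 2π/3 - 64/45. -/
/-!
Since `g' = -2√(1 - x²)` and `g 1 = 0`, integrating by parts against `x` gives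
`∫₀¹ g² = 4 ∫₀¹ x √(1 - x²) g(x) dx`; integrating by parts once more, now against
`-(1 - x²)^{3/2} / 3`, leaves `4 g(0) / 3 - (8/3) ∫₀¹ (1 - x²)² dx = 2π/3 - 64/45`.
-/

open Real

/-- The area of the segment of the unit disc cut off by the chord at distance `x` from the centre. -/
noncomputable def segmentArea (x : ℝ) : ℝ := arccos x - x * √(1 - x ^ 2)

noncomputable def segmentAreaSqPrimitive (x : ℝ) : ℝ :=
  x * segmentArea x ^ 2 - 4 / 3 * √(1 - x ^ 2) ^ 3 * segmentArea x
    - 8 / 3 * (x - 2 * x ^ 3 / 3 + x ^ 5 / 5)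

@[fun_prop]
theorem continuous_segmentArea : Continuous segmentArea := by
  unfold segmentArea; fun_prop

theorem continuous_segmentAreaSqPrimitive : Continuous segmentAreaSqPrimitive := by
  unfold segmentAreaSqPrimitive; fun_prop

section

variable {x : ℝ}

theorem hasDerivAt_sqrt_one_sub_sq (hx : x ^ 2 ≠ 1) :
    HasDerivAt (fun x => √(1 - x ^ 2)) (-x / √(1 - x ^ 2)) x := by
  convert ((hasDerivAt_pow 2 x).const_sub 1).sqrt (sub_ne_zero.2 hx.symm) using 1
  field_simp
  ring

theorem hasDerivAt_segmentArea (hx₁ : -1 < x) (hx₂ : x < 1) :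
    HasDerivAt segmentArea (-2 * √(1 - x ^ 2)) x := by
  have hsq : √(1 - x ^ 2) ^ 2 = 1 - x ^ 2 := sq_sqrt (by nlinarith)
  have hs : √(1 - x ^ 2) ≠ 0 := (sqrt_pos.2 (by nlinarith)).ne'
  have h := (hasDerivAt_arccos hx₁.ne' hx₂.ne).sub
    ((hasDerivAt_id x).mul (hasDerivAt_sqrt_one_sub_sq (by nlinarith)))
  refine (h : HasDerivAt segmentArea _ x).congr_deriv ?_
  simp only [id]
  field_simp
  linear_combination hsq

theorem hasDerivAt_segmentAreaSqPrimitive (hx₁ : -1 < x) (hx₂ : x < 1) :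
    HasDerivAt segmentAreaSqPrimitive (segmentArea x ^ 2) x := by
  have hsq : √(1 - x ^ 2) ^ 2 = 1 - x ^ 2 := sq_sqrt (by nlinarith)
  have hg := hasDerivAt_segmentArea hx₁ hx₂
  have hsd := hasDerivAt_sqrt_one_sub_sq (x := x) (by nlinarith)
  have h := (((hasDerivAt_id x).mul (hg.pow 2)).sub (((hsd.pow 3).const_mul (4 / 3)).mul hg)).sub
    ((((hasDerivAt_id x).sub ((hasDerivAt_pow 3 x).const_mul 2 |>.div_const 3)).add
      ((hasDerivAt_pow 5 x).div_const 5)).const_mul (8 / 3))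
  refine (h : HasDerivAt segmentAreaSqPrimitive _ x).congr_deriv ?_
  simp only [id, Pi.pow_apply]
  push_cast
  field_simp
  linear_combination 8 * (√(1 - x ^ 2) ^ 2 + 1 - x ^ 2) * hsq

end

theorem integral_g_sq
    (g : ℝ → ℝ) (hg : ∀ x, g x = Real.arccos x - x * Real.sqrt (1 - x ^ 2)) :
    ∫ u in (0:ℝ)..1, (g u) ^ 2 = 2 * Real.pi / 3 - 64 / 45 := by
  obtain rfl : g = segmentArea := funext hg
  rw [intervalIntegral.integral_eq_sub_of_hasDerivAt_of_le zero_le_one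
    continuous_segmentAreaSqPrimitive.continuousOn
    (fun x hx => hasDerivAt_segmentAreaSqPrimitive (by linarith [hx.1]) hx.2)
    ((continuous_segmentArea.pow 2).intervalIntegrable _ _)]
  norm_num [segmentAreaSqPrimitive, segmentArea]
  ring
end

section
/- Let g(x) = arccos(x) - x·√(1-x²) and G(1) = ∫₀¹ g(u) du = 2/3. Then ∫₀¹ g(x₁) · (∫_{√(1-x₁²)}^1 dx₂) dx₁ = 2/3 - π²/16. -/
/-!
Since the inner integral is `1 - √(1 - x²)`, the integral splits as `G(1) - ∫₀¹ g(x) √(1 - x²) dx`.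
The integrand `g(x) √(1 - x²) = arccos x · √(1 - x²) - x + x³` has the elementary primitive
`-arccos² x / 4 + x arccos x √(1 - x²) / 2 - x² / 4 + x⁴ / 4`, which vanishes at `1` and equals
`-π² / 16` at `0`.
-/

open Real

noncomputable def arccosSqrtPrimitive (x : ℝ) : ℝ :=
  -arccos x ^ 2 / 4 + x * arccos x * √(1 - x ^ 2) / 2 - x ^ 2 / 4 + x ^ 4 / 4

lemma continuous_sqrt_one_sub_sq : Continuous fun x : ℝ => √(1 - x ^ 2) := by
  fun_prop

lemma continuous_arccos_sub_mul_sqrt : Continuous fun x => arccos x - x * √(1 - x ^ 2) :=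
  continuous_arccos.sub (continuous_id.mul continuous_sqrt_one_sub_sq)

lemma continuous_arccosSqrtPrimitive : Continuous arccosSqrtPrimitive := by
  have := continuous_arccos
  have := continuous_sqrt_one_sub_sq
  unfold arccosSqrtPrimitive
  fun_prop

lemma hasDerivAt_arccosSqrtPrimitive {x : ℝ} (hx : x ∈ Set.Ioo (-1 : ℝ) 1) :
    HasDerivAt arccosSqrtPrimitive ((arccos x - x * √(1 - x ^ 2)) * √(1 - x ^ 2)) x := by
  obtain ⟨hx₀, hx₁⟩ := hx
  have hpos : 0 < 1 - x ^ 2 := by nlinarith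
  have hs : √(1 - x ^ 2) ^ 2 = 1 - x ^ 2 := sq_sqrt hpos.le
  have dA : HasDerivAt arccos (-(1 / √(1 - x ^ 2))) x := hasDerivAt_arccos hx₀.ne' hx₁.ne
  have dS : HasDerivAt (fun y => √(1 - y ^ 2)) _ x :=
    ((hasDerivAt_pow 2 x).const_sub 1).sqrt hpos.ne'
  have dK := ((((dA.pow 2).neg.div_const 4).add
    ((((hasDerivAt_id x).mul dA).mul dS).div_const 2)).sub
    ((hasDerivAt_pow 2 x).div_const 4)).add ((hasDerivAt_pow 4 x).div_const 4)
  refine (dK.congr_deriv ?_ : HasDerivAt arccosSqrtPrimitive _ x)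
  field_simp
  simp only [id, Pi.mul_apply]
  norm_num
  linear_combination (-8 * arccos x + 16 * x * √(1 - x ^ 2)) * hs

lemma integral_arccos_sub_mul_sqrt_mul_sqrt :
    ∫ x in (0:ℝ)..1, (arccos x - x * √(1 - x ^ 2)) * √(1 - x ^ 2) = π ^ 2 / 16 := by
  rw [intervalIntegral.integral_eq_sub_of_hasDerivAt_of_le zero_le_one
    continuous_arccosSqrtPrimitive.continuousOn
    (fun x hx => hasDerivAt_arccosSqrtPrimitive (Set.Ioo_subset_Ioo_left (by norm_num) hx))
    ((continuous_arccos_sub_mul_sqrt.mul continuous_sqrt_one_sub_sq).intervalIntegrable 0 1)]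
  norm_num [arccosSqrtPrimitive]
  ring

theorem integral_g_outer_band
    (g : ℝ → ℝ) (hg : ∀ x, g x = Real.arccos x - x * Real.sqrt (1 - x ^ 2))
    (hG1 : ∫ u in (0:ℝ)..1, g u = 2 / 3) :
    ∫ x₁ in (0:ℝ)..1, g x₁ * (∫ _x₂ in (Real.sqrt (1 - x₁ ^ 2))..1, (1:ℝ)) =
      2 / 3 - Real.pi ^ 2 / 16 := by
  have hg_cont : Continuous g := funext hg ▸ continuous_arccos_sub_mul_sqrt
  have hgs_cont : Continuous fun x => g x * √(1 - x ^ 2) :=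
    hg_cont.mul continuous_sqrt_one_sub_sq
  simp only [intervalIntegral.integral_const, smul_eq_mul, mul_one, mul_sub]
  rw [intervalIntegral.integral_sub (hg_cont.intervalIntegrable 0 1)
    (hgs_cont.intervalIntegrable 0 1), hG1]
  simp only [hg, integral_arccos_sub_mul_sqrt_mul_sqrt]
end

section
/- Let n > 0 and 0 < r < n/2. If U and V are independent uniform random points in the square [0,n]², then P(dist(U,V) ≤ r) = πr²/n² - 8r³/(3n³) + r⁴/(2n⁴). -/
/-!
Shearing `(x, y) ↦ (x - y, y)` preserves volume, so the measure of
`{(x, y) ∈ Q × Q : x - y ∈ D}` is `∫_{c ∈ D} vol (Q ∩ (Q - c)) dc`. For the square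
`Q = [0, n]²` and `c` in the disc of radius `r ≤ n` the overlap is a rectangle of area
`(n - |c₁|) (n - |c₂|)`. Integrating over the disc in Cartesian coordinates leaves the
one-variable integrals of `√(r² - u²)`, `u √(r² - u²)` and of polynomials.
-/

open MeasureTheory Set Real

theorem measure_prod_setOf_sub_mem {G : Type*} [MeasurableSpace G] [AddGroup G]
    [MeasurableAdd₂ G] [MeasurableNeg G] (μ : Measure G) [SFinite μ] [μ.IsAddRightInvariant]
    {A B D : Set G} (hA : MeasurableSet A) (hB : MeasurableSet B) (hD : MeasurableSet D) :
    (μ.prod μ) {p | p.1 ∈ A ∧ p.2 ∈ B ∧ p.1 - p.2 ∈ D} =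
      ∫⁻ c in D, μ (B ∩ (c + ·) ⁻¹' A) ∂μ := by
  set S : Set (G × G) := {q | q.1 ∈ D ∧ q.2 ∈ B ∧ q.1 + q.2 ∈ A}
  have hS : MeasurableSet S :=
    (measurable_fst hD).inter ((measurable_snd hB).inter ((measurable_fst.add measurable_snd) hA))
  have hpre : {p : G × G | p.1 ∈ A ∧ p.2 ∈ B ∧ p.1 - p.2 ∈ D} =
      (fun p => (p.1 - p.2, p.2)) ⁻¹' S := by
    ext p; simp only [mem_ofPred_eq, preimage_ofPred_eq, sub_add_cancel, S]; tauto
  rw [hpre, (measurePreserving_sub_prod μ μ).measure_preimage hS.nullMeasurableSet,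
    Measure.prod_apply hS, ← lintegral_indicator hD]
  congr 1 with c
  by_cases hc : c ∈ D
  · rw [indicator_of_mem hc]; congr 1 with y; simp [S, hc]
  · rw [indicator_of_notMem hc]; simp [S, hc]

theorem intervalIntegral_comp_abs {g : ℝ → ℝ} {a : ℝ} (ha : 0 ≤ a) :
    ∫ x in -a..a, g |x| = 2 * ∫ x in 0..a, g x := by
  have hind : (Icc (-a) a).indicator (fun x => g |x|) = fun x => (Icc 0 a).indicator g |x| := by
    ext x; simp only [indicator, mem_Icc, abs_nonneg, abs_le, true_and]
  rw [intervalIntegral.integral_of_le (neg_le_self ha), ← integral_Icc_eq_integral_Ioc,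
    ← integral_indicator measurableSet_Icc, hind, integral_comp_abs,
    setIntegral_indicator measurableSet_Icc, intervalIntegral.integral_of_le ha,
    show Ioi (0 : ℝ) ∩ Icc 0 a = Ioc 0 a by ext; simp +contextual [le_of_lt]]

theorem integral_sub_abs (n : ℝ) {s : ℝ} (hs : 0 ≤ s) :
    ∫ v in -s..s, (n - |v|) = 2 * n * s - s ^ 2 := by
  rw [intervalIntegral_comp_abs (g := fun v => n - v) hs, intervalIntegral.integral_sub
    intervalIntegrable_const intervalIntegral.intervalIntegrable_id]
  simp only [intervalIntegral.integral_const, integral_id, smul_eq_mul]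
  ring

theorem integral_sqrt_sq_sub_sq {r : ℝ} (hr : 0 < r) :
    ∫ u in 0..r, √(r ^ 2 - u ^ 2) = π * r ^ 2 / 4 := by
  have hscale : ∀ u, √(r ^ 2 - u ^ 2) = r * √(1 - (u / r) ^ 2) := by
    intro u
    rw [show r ^ 2 - u ^ 2 = r ^ 2 * (1 - (u / r) ^ 2) by field_simp, sqrt_mul (sq_nonneg r),
      sqrt_sq hr.le]
  have hsymm : ∫ u in -r..r, √(r ^ 2 - u ^ 2) = π * r ^ 2 / 2 := by
    simp only [hscale, intervalIntegral.integral_const_mul,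
      intervalIntegral.integral_comp_div (fun x => √(1 - x ^ 2)) hr.ne', neg_div,
      div_self hr.ne', integral_sqrt_one_sub_sq, smul_eq_mul]
    ring
  have hhalf := intervalIntegral_comp_abs (g := fun u => √(r ^ 2 - u ^ 2)) hr.le
  simp only [sq_abs] at hhalf
  linarith

theorem integral_mul_sqrt_sq_sub_sq {r : ℝ} (hr : 0 ≤ r) :
    ∫ u in 0..r, u * √(r ^ 2 - u ^ 2) = r ^ 3 / 3 := by
  have hderiv : ∀ u, HasDerivAt (fun u => -(r ^ 2 - u ^ 2) ^ (3 / 2 : ℝ) / 3)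
      (u * √(r ^ 2 - u ^ 2)) u := by
    intro u
    refine ((((hasDerivAt_pow 2 u).const_sub (r ^ 2)).rpow_const (p := 3 / 2)
      (Or.inr (by norm_num))).neg.div_const 3).congr_deriv ?_
    rw [sqrt_eq_rpow]; norm_num; ring
  have hr3 : (r ^ 2) ^ (3 / 2 : ℝ) = r ^ 3 := by
    rw [← rpow_natCast, ← rpow_mul hr]; norm_num
  rw [intervalIntegral.integral_eq_sub_of_hasDerivAt (fun u _ => hderiv u)
    (Continuous.intervalIntegrable (by fun_prop) _ _)]
  norm_num [hr3]
  ring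

theorem integral_sub_mul_sq_sub_sq (n r : ℝ) :
    ∫ u in 0..r, (n - u) * (r ^ 2 - u ^ 2) = 2 * n * r ^ 3 / 3 - r ^ 4 / 4 := by
  have hexpand : ∀ u : ℝ, (n - u) * (r ^ 2 - u ^ 2) =
      n * r ^ 2 - r ^ 2 * u ^ 1 - n * u ^ 2 + u ^ 3 := by
    intro u; ring
  simp only [hexpand]
  rw [intervalIntegral.integral_add, intervalIntegral.integral_sub, intervalIntegral.integral_sub]
  all_goals try exact Continuous.intervalIntegrable (by fun_prop) _ _
  simp only [intervalIntegral.integral_const_mul, integral_pow, intervalIntegral.integral_const]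
  norm_num
  ring

theorem integral_sub_abs_mul_chord (n : ℝ) {r : ℝ} (hr : 0 < r) :
    ∫ u in -r..r, (n - |u|) * (2 * n * √(r ^ 2 - u ^ 2) - (r ^ 2 - u ^ 2)) =
      π * n ^ 2 * r ^ 2 - 8 * n * r ^ 3 / 3 + r ^ 4 / 2 := by
  have hfold := intervalIntegral_comp_abs
    (g := fun u => (n - u) * (2 * n * √(r ^ 2 - u ^ 2) - (r ^ 2 - u ^ 2))) hr.le
  simp only [sq_abs] at hfold
  have hsplit : ∀ u, (n - u) * (2 * n * √(r ^ 2 - u ^ 2) - (r ^ 2 - u ^ 2)) =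
      2 * n ^ 2 * √(r ^ 2 - u ^ 2) - 2 * n * (u * √(r ^ 2 - u ^ 2)) -
        (n - u) * (r ^ 2 - u ^ 2) := by
    intro u; ring
  simp only [hsplit] at hfold
  rw [hfold, intervalIntegral.integral_sub, intervalIntegral.integral_sub]
  all_goals try exact Continuous.intervalIntegrable (by fun_prop) _ _
  rw [intervalIntegral.integral_const_mul, intervalIntegral.integral_const_mul,
    integral_sqrt_sq_sub_sq hr, integral_mul_sqrt_sq_sub_sq hr.le, integral_sub_mul_sq_sub_sq]
  ring

def square (n : ℝ) : Set (ℝ × ℝ) := Icc 0 n ×ˢ Icc 0 n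

-- The Euclidean disc: the default metric on `ℝ × ℝ` is the sup metric.
def disc (r : ℝ) : Set (ℝ × ℝ) := {c | c.1 ^ 2 + c.2 ^ 2 ≤ r ^ 2}

theorem volume_Icc_inter_preimage_add (n c : ℝ) :
    volume (Icc 0 n ∩ (c + ·) ⁻¹' Icc 0 n) = ENNReal.ofReal (n - |c|) := by
  have : Icc 0 n ∩ (c + ·) ⁻¹' Icc 0 n = Icc (max 0 (-c)) (min n (n - c)) := by
    ext y; simp only [mem_inter_iff, mem_preimage, mem_Icc, le_min_iff, max_le_iff]
    constructor <;> intro h <;> refine ⟨⟨?_, ?_⟩, ?_, ?_⟩ <;> linarith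
  rw [this, volume_Icc]
  congr 1
  rcases abs_cases c with ⟨h, hc⟩ | ⟨h, hc⟩
  · rw [h, max_eq_left (by linarith), min_eq_right (by linarith)]; ring
  · rw [h, max_eq_right (by linarith), min_eq_left (by linarith)]

theorem volume_square_inter_preimage_add (n : ℝ) (c : ℝ × ℝ) :
    volume (square n ∩ (c + ·) ⁻¹' square n) =
      ENNReal.ofReal (n - |c.1|) * ENNReal.ofReal (n - |c.2|) := by
  have : square n ∩ (c + ·) ⁻¹' square n =
      (Icc 0 n ∩ (c.1 + ·) ⁻¹' Icc 0 n) ×ˢ (Icc 0 n ∩ (c.2 + ·) ⁻¹' Icc 0 n) := by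
    ext y
    simp only [square, mem_inter_iff, mem_preimage, mem_prod, Prod.fst_add, Prod.snd_add]
    tauto
  rw [this, Measure.volume_eq_prod, Measure.prod_prod, volume_Icc_inter_preimage_add,
    volume_Icc_inter_preimage_add]

theorem measurableSet_disc (r : ℝ) : MeasurableSet (disc r) :=
  (isClosed_le (by fun_prop) continuous_const).measurableSet

theorem disc_subset_Icc_prod {r : ℝ} (hr : 0 ≤ r) : disc r ⊆ Icc (-r) r ×ˢ Icc (-r) r := by
  intro c hc
  simp only [disc, mem_ofPred_eq] at hc
  exact ⟨abs_le.mp (abs_le_of_sq_le_sq (by nlinarith [sq_nonneg c.2]) hr),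
    abs_le.mp (abs_le_of_sq_le_sq (by nlinarith [sq_nonneg c.1]) hr)⟩

theorem mem_disc_iff {r : ℝ} (hr : 0 ≤ r) {c : ℝ × ℝ} :
    c ∈ disc r ↔ c.1 ∈ Icc (-r) r ∧ c.2 ∈ Icc (-√(r ^ 2 - c.1 ^ 2)) √(r ^ 2 - c.1 ^ 2) := by
  rw [disc, mem_ofPred_eq]
  constructor
  · intro h
    have h1 : c.1 ^ 2 ≤ r ^ 2 := by nlinarith [sq_nonneg c.2]
    exact ⟨abs_le.mp (abs_le_of_sq_le_sq h1 hr), (Real.sq_le (by linarith)).mp (by linarith)⟩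
  · rintro ⟨h1, h2⟩
    have h1 : c.1 ^ 2 ≤ r ^ 2 := sq_le_sq' h1.1 h1.2
    linarith [(Real.sq_le (by linarith)).mpr h2]

theorem sub_abs_nonneg_of_mem_disc {n r : ℝ} (hr : 0 ≤ r) (hrn : r ≤ n) {c : ℝ × ℝ}
    (hc : c ∈ disc r) : 0 ≤ n - |c.1| ∧ 0 ≤ n - |c.2| := by
  obtain ⟨h1, h2⟩ := disc_subset_Icc_prod hr hc
  exact ⟨by linarith [abs_le.mpr h1], by linarith [abs_le.mpr h2]⟩

theorem integrableOn_disc {r : ℝ} (hr : 0 ≤ r) {f : ℝ × ℝ → ℝ} (hf : Continuous f) :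
    IntegrableOn f (disc r) :=
  (hf.continuousOn.integrableOn_compact (isCompact_Icc.prod isCompact_Icc)).mono_set
    (disc_subset_Icc_prod hr)

theorem setIntegral_disc {r : ℝ} (hr : 0 ≤ r) {f : ℝ × ℝ → ℝ} (hf : IntegrableOn f (disc r)) :
    ∫ c in disc r, f c = ∫ u in -r..r, ∫ v in -√(r ^ 2 - u ^ 2)..√(r ^ 2 - u ^ 2), f (u, v) := by
  rw [← integral_indicator (measurableSet_disc r), Measure.volume_eq_prod,
    integral_prod _ (hf.integrable_indicator (measurableSet_disc r)),
    intervalIntegral.integral_of_le (by linarith), ← integral_Icc_eq_integral_Ioc,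
    ← integral_indicator measurableSet_Icc]
  congr 1 with u
  by_cases hu : u ∈ Icc (-r) r
  · rw [indicator_of_mem hu, intervalIntegral.integral_of_le (neg_le_self (sqrt_nonneg _)),
      ← integral_Icc_eq_integral_Ioc, ← integral_indicator measurableSet_Icc]
    congr 1 with v
    simp only [indicator, mem_disc_iff hr, hu, true_and]
  · simp [indicator, mem_disc_iff hr, hu]

theorem integral_disc_sub_abs_mul_sub_abs (n : ℝ) {r : ℝ} (hr : 0 < r) :
    ∫ c in disc r, (n - |c.1|) * (n - |c.2|) =
      π * n ^ 2 * r ^ 2 - 8 * n * r ^ 3 / 3 + r ^ 4 / 2 := by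
  rw [setIntegral_disc hr.le (integrableOn_disc hr.le (by fun_prop)),
    ← integral_sub_abs_mul_chord n hr]
  refine intervalIntegral.integral_congr fun u hu => ?_
  rw [uIcc_of_le (by linarith), mem_Icc] at hu
  have hu2 : 0 ≤ r ^ 2 - u ^ 2 := sub_nonneg.mpr (sq_le_sq' hu.1 hu.2)
  simp only [intervalIntegral.integral_const_mul, integral_sub_abs n (sqrt_nonneg _), sq_sqrt hu2]

theorem volume_setOf_sub_mem_disc {n r : ℝ} (hr : 0 ≤ r) (hrn : r ≤ n) :
    volume {p : (ℝ × ℝ) × (ℝ × ℝ) | p.1 ∈ square n ∧ p.2 ∈ square n ∧ p.1 - p.2 ∈ disc r} =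
      ENNReal.ofReal (∫ c in disc r, (n - |c.1|) * (n - |c.2|)) := by
  have hsquare : MeasurableSet (square n) := measurableSet_Icc.prod measurableSet_Icc
  have hnonneg := fun c (hc : c ∈ disc r) => sub_abs_nonneg_of_mem_disc hr hrn hc
  rw [Measure.volume_eq_prod, measure_prod_setOf_sub_mem volume hsquare hsquare
    (measurableSet_disc r), ofReal_integral_eq_lintegral_ofReal
    (integrableOn_disc hr (by fun_prop)) (ae_restrict_of_forall_mem (measurableSet_disc r)
      fun c hc => mul_nonneg (hnonneg c hc).1 (hnonneg c hc).2)]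
  refine setLIntegral_congr_fun (measurableSet_disc r) fun c hc => ?_
  rw [volume_square_inter_preimage_add, ENNReal.ofReal_mul (hnonneg c hc).1]

theorem EuclideanSpace.dist_le_iff_fin_two {x y : EuclideanSpace ℝ (Fin 2)} {r : ℝ}
    (hr : 0 ≤ r) :
    dist x y ≤ r ↔ (x 0 - y 0) ^ 2 + (x 1 - y 1) ^ 2 ≤ r ^ 2 := by
  rw [EuclideanSpace.dist_eq, Fin.sum_univ_two, Real.dist_eq, Real.dist_eq, sq_abs, sq_abs,
    sqrt_le_left hr]

theorem volume_setOf_dist_le_eq_volume_setOf_sub_mem_disc {n r : ℝ} (hr : 0 ≤ r) :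
    volume {p : EuclideanSpace ℝ (Fin 2) × EuclideanSpace ℝ (Fin 2) |
        (∀ i, p.1 i ∈ Icc 0 n) ∧ (∀ i, p.2 i ∈ Icc 0 n) ∧ dist p.1 p.2 ≤ r} =
      volume {p : (ℝ × ℝ) × (ℝ × ℝ) | p.1 ∈ square n ∧ p.2 ∈ square n ∧ p.1 - p.2 ∈ disc r} := by
  let φ : EuclideanSpace ℝ (Fin 2) ≃ᵐ ℝ × ℝ :=
    (MeasurableEquiv.toLp 2 (Fin 2 → ℝ)).symm.trans MeasurableEquiv.finTwoArrow
  have hφ : MeasurePreserving φ := (volume_preserving_finTwoArrow ℝ).comp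
      (EuclideanSpace.volume_preserving_symm_measurableEquiv_toLp (Fin 2))
  have hΦ : MeasurePreserving (φ.prodCongr φ) := hφ.prod hφ
  rw [← hΦ.measure_preimage_equiv]
  have hΦp : ∀ p, φ.prodCongr φ p = ((p.1 0, p.1 1), (p.2 0, p.2 1)) := fun p => rfl
  congr 1 with p
  simp only [mem_preimage, hΦp, mem_ofPred_eq, square, disc, mem_prod, Prod.fst_sub,
    Prod.snd_sub, Fin.forall_fin_two, EuclideanSpace.dist_le_iff_fin_two hr]

theorem prob_dist_le_r_general (n r : ℝ) (hr : 0 < r) (hrn : r < n / 2) :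
    (volume {p : (EuclideanSpace ℝ (Fin 2)) × (EuclideanSpace ℝ (Fin 2)) |
        (∀ i, p.1 i ∈ Set.Icc (0:ℝ) n) ∧ (∀ i, p.2 i ∈ Set.Icc (0:ℝ) n) ∧
        dist p.1 p.2 ≤ r}).toReal / n ^ 4 =
      Real.pi * r ^ 2 / n ^ 2 - 8 * r ^ 3 / (3 * n ^ 3) + r ^ 4 / (2 * n ^ 4) := by
  have hn : 0 < n := by linarith
  have hrn' : r ≤ n := by linarith
  rw [volume_setOf_dist_le_eq_volume_setOf_sub_mem_disc hr.le,
    volume_setOf_sub_mem_disc hr.le hrn',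
    ENNReal.toReal_ofReal (setIntegral_nonneg (measurableSet_disc r) fun c hc => ?_),
    integral_disc_sub_abs_mul_sub_abs n hr]
  · field_simp
  · obtain ⟨h1, h2⟩ := sub_abs_nonneg_of_mem_disc hr.le hrn' hc
    exact mul_nonneg h1 h2

theorem prob_dist_le_r (n r : ℝ) (hn : 0 < n) (hr : 0 < r) (hrn : r < n / 2) :
    (volume {p : (EuclideanSpace ℝ (Fin 2)) × (EuclideanSpace ℝ (Fin 2)) |
        (∀ i, p.1 i ∈ Set.Icc (0:ℝ) n) ∧ (∀ i, p.2 i ∈ Set.Icc (0:ℝ) n) ∧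
        dist p.1 p.2 ≤ r}).toReal / n ^ 4 =
      Real.pi * r ^ 2 / n ^ 2 - 8 * r ^ 3 / (3 * n ^ 3) + r ^ 4 / (2 * n ^ 4) :=
  prob_dist_le_r_general n r hr hrn
end
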